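/- arXiv:1611.03692 — 2 statements merged into one kernel-verified Lean document; each statement's English description precedes it below -/
import Mathlib

section
/- If P ∈ Mat(d+1,d) is the matrix whose top d×d block is the identity and whose last row has every entry equal to −1, and M = I + (√(d+1) − 1)·𝟏𝟏ᵀ ∈ Mat(d,d), then P·M⁻¹·M⁻ᵀ·Pᵀ = I_{d+1} − J/(d+1), where J ∈ Mat(d+1,d+1) is the all-ones matrix. -/
open Matrix

/-- If `P ∈ Mat(d+1,d)` has top `d×d` block the identity and last row all `−1`, and
`M = I + (√(d+1)−1)·𝟏𝟏ᵀ`, then `P·M⁻¹·M⁻ᵀ·Pᵀ = I_{d+1} − J/(d+1)` with `J` all-ones. -/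
theorem stmt_4 (d : ℕ) (hd : 1 ≤ d)
    (M : Matrix (Fin d) (Fin d) ℝ)
    (hM : M = 1 + (Real.sqrt (d + 1) - 1) • Matrix.of (fun _ _ => (1 : ℝ) / d))
    (P : Matrix (Fin (d + 1)) (Fin d) ℝ)
    (hP : ∀ i j, P i j = if (i : ℕ) = d then -1 else if (i : ℕ) = (j : ℕ) then 1 else 0) :
    P * M⁻¹ * (M⁻¹)ᵀ * Pᵀ =
      1 - (((d : ℝ) + 1)⁻¹) • Matrix.of (fun _ _ : Fin (d + 1) => (1 : ℝ)) := by
  have hd0 : (d : ℝ) ≠ 0 := by positivity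
  have hd1 : (d : ℝ) + 1 ≠ 0 := by positivity
  set s : ℝ := Real.sqrt (d + 1) with hs
  have hs2 : s * s = (d : ℝ) + 1 := Real.mul_self_sqrt (by positivity)
  have hsne : s ≠ 0 := by
    intro h; rw [h] at hs2; simp at hs2; linarith
  set K : Matrix (Fin d) (Fin d) ℝ := Matrix.of (fun _ _ => (1 : ℝ) / d) with hK
  have hKK : K * K = K := by
    ext i j
    simp [hK, Matrix.mul_apply, Finset.sum_const, Finset.card_univ]
    field_simp
  set N : Matrix (Fin d) (Fin d) ℝ := 1 + (s⁻¹ - 1) • K with hN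
  have expand : ∀ a b : ℝ, (1 + a • K) * (1 + b • K) = 1 + (a + b + a * b) • K := by
    intro a b
    simp only [Matrix.mul_add, Matrix.add_mul, Matrix.one_mul, Matrix.mul_one,
      Matrix.smul_mul, Matrix.mul_smul, smul_smul, hKK, add_smul, smul_add, ← hK]
    module
  have hMN : M * N = 1 := by
    rw [hM, hN, expand]
    have : (s - 1) + (s⁻¹ - 1) + (s - 1) * (s⁻¹ - 1) = 0 := by
      field_simp
      try ring
    rw [this, zero_smul, add_zero]
  have hMinv : M⁻¹ = N := Matrix.inv_eq_right_inv hMN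
  have hNT : Nᵀ = N := by
    rw [hN]
    rw [Matrix.transpose_add, Matrix.transpose_smul, Matrix.transpose_one]
    congr 1
  set t : ℝ := ((d : ℝ) + 1)⁻¹ - 1 with ht
  have hNN : N * N = 1 + t • K := by
    rw [hN, expand]
    congr 1
    have h2 : s⁻¹ * s⁻¹ = ((d : ℝ) + 1)⁻¹ := by rw [← mul_inv, hs2]
    rw [ht]
    congr 1
    linear_combination h2
  have key : P * M⁻¹ * (M⁻¹)ᵀ * Pᵀ = P * Pᵀ + t • (P * K * Pᵀ) := by
    rw [hMinv, hNT]
    calc P * N * N * Pᵀ = P * (N * N) * Pᵀ := by rw [Matrix.mul_assoc P N N]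
      _ = P * (1 + t • K) * Pᵀ := by rw [hNN]
      _ = P * Pᵀ + t • (P * K * Pᵀ) := by
          rw [Matrix.mul_add, Matrix.mul_one, Matrix.add_mul, Matrix.mul_smul, Matrix.smul_mul]
  have hrow : ∀ i : Fin (d + 1), (∑ k, P i k) = if (i : ℕ) = d then -(d : ℝ) else 1 := by
    intro i
    by_cases h : (i : ℕ) = d
    · simp [hP, h, Finset.sum_const, Finset.card_univ]
    · have hlt : (i : ℕ) < d := lt_of_le_of_ne (Nat.lt_succ_iff.mp i.isLt) h
      have ei : ∀ k : Fin d, ((i : ℕ) = (k : ℕ)) ↔ ((⟨(i : ℕ), hlt⟩ : Fin d) = k) :=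
        fun k => Iff.symm Fin.ext_iff
      simp only [hP, h, if_false, ei]
      simp [Finset.sum_ite_eq]
  have hPKP : ∀ i j : Fin (d + 1), (P * K * Pᵀ) i j =
      (∑ l, P i l) * (1 / d) * (∑ k, P j k) := by
    intro i j
    have hPK : ∀ k : Fin d, (P * K) i k = (∑ l, P i l) * (1 / d) := by
      intro k
      rw [Matrix.mul_apply, Finset.sum_mul]
      simp [hK]
    rw [Matrix.mul_apply]
    simp only [Matrix.transpose_apply, hPK]
    rw [← Finset.mul_sum]
  have hPPT : ∀ i j : Fin (d + 1), (P * Pᵀ) i j =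
      if (i : ℕ) = d then (if (j : ℕ) = d then (d : ℝ) else -1)
      else (if (j : ℕ) = d then -1 else (if (i : ℕ) = (j : ℕ) then 1 else 0)) := by
    intro i j
    rw [Matrix.mul_apply]
    by_cases hi : (i : ℕ) = d <;> by_cases hj : (j : ℕ) = d
    · simp [hP, hi, hj, Finset.sum_const, Finset.card_univ]
    · have hjlt : (j : ℕ) < d := lt_of_le_of_ne (Nat.lt_succ_iff.mp j.isLt) hj
      have ej : ∀ k : Fin d, ((j : ℕ) = (k : ℕ)) ↔ ((⟨(j : ℕ), hjlt⟩ : Fin d) = k) :=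
        fun k => Iff.symm Fin.ext_iff
      simp only [hP, hi, hj, if_true, if_false, ej, Matrix.transpose_apply]
      simp [Finset.sum_ite_eq, mul_ite]
    · have hilt : (i : ℕ) < d := lt_of_le_of_ne (Nat.lt_succ_iff.mp i.isLt) hi
      have ei : ∀ k : Fin d, ((i : ℕ) = (k : ℕ)) ↔ ((⟨(i : ℕ), hilt⟩ : Fin d) = k) :=
        fun k => Iff.symm Fin.ext_iff
      simp only [hP, hi, hj, if_true, if_false, ei, Matrix.transpose_apply]
      simp [Finset.sum_ite_eq, ite_mul]
    · have hilt : (i : ℕ) < d := lt_of_le_of_ne (Nat.lt_succ_iff.mp i.isLt) hi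
      have hjlt : (j : ℕ) < d := lt_of_le_of_ne (Nat.lt_succ_iff.mp j.isLt) hj
      have ei : ∀ k : Fin d, ((i : ℕ) = (k : ℕ)) ↔ ((⟨(i : ℕ), hilt⟩ : Fin d) = k) :=
        fun k => Iff.symm Fin.ext_iff
      have ej : ∀ k : Fin d, ((j : ℕ) = (k : ℕ)) ↔ ((⟨(j : ℕ), hjlt⟩ : Fin d) = k) :=
        fun k => Iff.symm Fin.ext_iff
      have eij : ((i : ℕ) = (j : ℕ)) ↔ ((⟨(i : ℕ), hilt⟩ : Fin d) = (⟨(j : ℕ), hjlt⟩ : Fin d)) :=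
        Iff.symm Fin.ext_iff
      simp only [hP, hi, hj, if_false, ei, ej, eij]
      simp [Finset.sum_ite_eq, ite_mul, mul_ite]
      split <;> rename_i h1
      · simp only [hP, hj, if_false]
        rw [if_pos h1.symm]
      · simp only [hP, hj, if_false]
        rw [if_neg (fun h => h1 h.symm)]
  rw [key]
  ext i j
  rw [Matrix.add_apply, Matrix.smul_apply, hPPT, hPKP, hrow, hrow]
  simp only [Matrix.sub_apply, Matrix.smul_apply, Matrix.one_apply, Matrix.of_apply,
    smul_eq_mul, mul_one]
  by_cases hi : (i : ℕ) = d <;> by_cases hj : (j : ℕ) = d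
  · have hij : i = j := Fin.ext (by rw [hi, hj])
    rw [if_pos hi, if_pos hj, if_pos hi, if_pos hj, if_pos hij, ht]
    field_simp
    try ring
  · have hij : i ≠ j := fun h => hj (h ▸ hi)
    rw [if_pos hi, if_neg hj, if_pos hi, if_neg hj, if_neg hij, ht]
    field_simp
    try ring
  · have hij : i ≠ j := fun h => hi (h ▸ hj).symm.symm
    rw [if_neg hi, if_pos hj, if_neg hi, if_pos hj, if_neg hij, ht]
    field_simp
    try ring
  · by_cases hij : (i : ℕ) = (j : ℕ)
    · have hij' : i = j := Fin.ext hij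
      rw [if_neg hi, if_neg hj, if_pos hij, if_neg hi, if_neg hj, if_pos hij', ht]
      field_simp
      try ring
    · have hij' : i ≠ j := fun h => hij (by rw [h])
      rw [if_neg hi, if_neg hj, if_neg hij, if_neg hi, if_neg hj, if_neg hij', ht]
      field_simp
      try ring
end

section
/- Let ω₁,…,ω_{d+1} ∈ ℝᵈ, let Ω' ∈ Mat(d,d) have i-th column ω_i − ω_{d+1}, let M = I + (√(d+1) − 1)·𝟏𝟏ᵀ, and set Ω_M = Ω'·M⁻¹. Then Ω_M·Ω_Mᵀ = (d+1)·V, where V is the covariance matrix of the random vector taking each value ω_i with probability 1/(d+1). -/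
/-!
Write `E` for the idempotent matrix with all entries `1/d`. Then `M = 1 + (√(d+1) - 1) E` is
symmetric with `M² = 1 + d E`, so `M⁻¹ M⁻ᵀ = (1 + d E)⁻¹ = 1 - J / (d+1)`, `J` the all-ones matrix.
Hence the `(r, s)` entry of `Ω_M Ω_Mᵀ = Ω' (1 - J / (d+1)) Ω'ᵀ` is the scatter
`∑ xᵢ yᵢ - (∑ xᵢ)(∑ yᵢ) / (d+1)` of `xᵢ = ωᵢ r - ω_{d+1} r`, `yᵢ = ωᵢ s - ω_{d+1} s`, where the
sums may run over all `d + 1` indices since the last terms vanish. The scatter is invariant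
under translating `x` and `y`, so it equals `(d+1) V r s`.
-/

open Matrix

theorem IsIdempotentElem.one_add_smul_mul_one_add_smul {R A : Type*} [CommRing R] [Ring A]
    [Algebra R A] {E : A} (hE : IsIdempotentElem E) (a b : R) :
    (1 + a • E) * (1 + b • E) = 1 + (a + b + a * b) • E := by
  rw [mul_add, add_mul, add_mul, smul_mul_smul_comm, hE.eq, add_smul, add_smul]
  simp only [one_mul, mul_one]
  abel

namespace Matrix

variable {n K : Type*} [Fintype n] [DecidableEq n] [Field K]

theorem inv_one_add_smul_of_isIdempotentElem {E : Matrix n n K} (hE : IsIdempotentElem E)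
    {c : K} (hc : 1 + c ≠ 0) : (1 + c • E)⁻¹ = 1 - (c / (1 + c)) • E := by
  refine inv_eq_right_inv ?_
  rw [sub_eq_add_neg, ← neg_smul, hE.one_add_smul_mul_one_add_smul]
  convert add_zero (1 : Matrix n n K) using 2
  rw [← zero_smul K E]
  congr 1
  field_simp
  ring

omit [DecidableEq n] in
theorem isIdempotentElem_of_inv_card [Nonempty n] [CharZero K] :
    IsIdempotentElem (of fun _ _ : n => (1 : K) / Fintype.card n) := by
  ext i j
  simp [mul_apply]

theorem mul_one_sub_smul_ones_mul_transpose_apply {m : Type*} (A : Matrix m n K) (c : K)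
    (r s : m) :
    (A * (1 - c • of fun _ _ => 1 : Matrix n n K) * Aᵀ) r s
      = ∑ j, A r j * A s j - c * (∑ j, A r j) * ∑ j, A s j := by
  rw [Matrix.mul_sub, Matrix.mul_one, Matrix.sub_mul, Matrix.mul_smul, Matrix.smul_mul,
    sub_apply, smul_apply, smul_eq_mul, mul_assoc c]
  simp only [mul_apply, transpose_apply, of_apply, Finset.sum_mul]
  rw [Finset.sum_comm]
  simp [Finset.mul_sum]

end Matrix

theorem inv_mul_inv_transpose_eq_one_sub_smul_ones {d : ℕ} (hd : d ≠ 0)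
    (M : Matrix (Fin d) (Fin d) ℝ)
    (hM : M = 1 + (Real.sqrt (d + 1) - 1) • Matrix.of (fun _ _ => (1 : ℝ) / d)) :
    M⁻¹ * M⁻¹ᵀ = 1 - ((d : ℝ) + 1)⁻¹ • Matrix.of (fun _ _ => 1) := by
  have : NeZero d := ⟨hd⟩
  set E : Matrix (Fin d) (Fin d) ℝ := Matrix.of fun _ _ => (1 : ℝ) / d
  have hE : IsIdempotentElem E := by
    have h := Matrix.isIdempotentElem_of_inv_card (n := Fin d) (K := ℝ)
    rwa [Fintype.card_fin] at h
  have hMT : Mᵀ = M := by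
    rw [hM, transpose_add, transpose_one, transpose_smul]
    rfl
  have hMM : M * M = 1 + (d : ℝ) • E := by
    have hsqrt := Real.sq_sqrt (by positivity : (0 : ℝ) ≤ d + 1)
    rw [hM, hE.one_add_smul_mul_one_add_smul]
    congr 2
    linear_combination hsqrt
  calc M⁻¹ * M⁻¹ᵀ = (M * M)⁻¹ := by rw [transpose_nonsing_inv, hMT, Matrix.mul_inv_rev]
    _ = 1 - ((d : ℝ) / (1 + d)) • E := by
      rw [hMM, Matrix.inv_one_add_smul_of_isIdempotentElem hE (by positivity)]
    _ = _ := by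
      congr 1
      ext i j
      simp only [E, of_apply, Matrix.smul_apply, smul_eq_mul]
      field_simp
      ring

section Scatter

variable {ι K : Type*} [Fintype ι] [Field K]

/-- `Fintype.card ι` times the empirical covariance of `x` and `y`. -/
def scatter (x y : ι → K) : K :=
  ∑ i, x i * y i - (Fintype.card ι : K)⁻¹ * (∑ i, x i) * ∑ i, y i

theorem scatter_sub_const [CharZero K] (x y : ι → K) (a b : K) :
    scatter (fun i => x i - a) (fun i => y i - b) = scatter x y := by
  rcases isEmpty_or_nonempty ι with hι | hι
  · simp [scatter]
  have hcard : (Fintype.card ι : K) ≠ 0 := Nat.cast_ne_zero.mpr Fintype.card_ne_zero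
  simp only [scatter, sub_mul, mul_sub, Finset.sum_sub_distrib, ← Finset.mul_sum,
    ← Finset.sum_mul, Finset.sum_const, Finset.card_univ, nsmul_eq_mul]
  field_simp
  ring

theorem scatter_eq_sum_castSucc_sub_last [CharZero K] {n : ℕ} (x y : Fin (n + 1) → K) :
    scatter x y = ∑ j : Fin n, (x j.castSucc - x (Fin.last n)) * (y j.castSucc - y (Fin.last n))
      - ((n : K) + 1)⁻¹ * (∑ j : Fin n, (x j.castSucc - x (Fin.last n)))
        * ∑ j : Fin n, (y j.castSucc - y (Fin.last n)) := by
  rw [← scatter_sub_const x y (x (Fin.last n)) (y (Fin.last n)), scatter, Fintype.card_fin,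
    Nat.cast_succ]
  simp only [Fin.sum_univ_castSucc (n := n), sub_self, mul_zero, add_zero]

end Scatter

/-- If `Ω'` has columns `ω_i − ω_{d+1}`, `M = I + (√(d+1)−1)·𝟏𝟏ᵀ` and `Ω_M = Ω'·M⁻¹`,
then `Ω_M·Ω_Mᵀ = (d+1)·V` with `V` the covariance matrix of the uniform vector on `{ω_i}`. -/
theorem stmt_6 (d : ℕ) (hd : 1 ≤ d) (ω : Fin (d + 1) → Fin d → ℝ)
    (M : Matrix (Fin d) (Fin d) ℝ)
    (hM : M = 1 + (Real.sqrt (d + 1) - 1) • Matrix.of (fun _ _ => (1 : ℝ) / d))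
    (Ω' : Matrix (Fin d) (Fin d) ℝ)
    (hΩ' : ∀ r i, Ω' r i = ω i.castSucc r - ω (Fin.last d) r)
    (ΩM : Matrix (Fin d) (Fin d) ℝ) (hΩM : ΩM = Ω' * M⁻¹)
    (μ : Fin d → ℝ) (hμ : μ = (1 / ((d : ℝ) + 1)) • ∑ i, ω i)
    (V : Matrix (Fin d) (Fin d) ℝ)
    (hV : V = (1 / ((d : ℝ) + 1)) • ∑ i, vecMulVec (ω i) (ω i) - vecMulVec μ μ) :
    ΩM * ΩMᵀ = ((d : ℝ) + 1) • V := by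
  have hΩM' : ΩM * ΩMᵀ = Ω' * (1 - ((d : ℝ) + 1)⁻¹ • Matrix.of fun _ _ => 1) * Ω'ᵀ := by
    rw [hΩM, transpose_mul, ← inv_mul_inv_transpose_eq_one_sub_smul_ones (by omega) M hM,
      Matrix.mul_assoc, Matrix.mul_assoc, Matrix.mul_assoc]
  ext r s
  rw [hΩM', Matrix.mul_one_sub_smul_ones_mul_transpose_apply]
  simp only [hΩ']
  rw [← scatter_eq_sum_castSucc_sub_last (fun i => ω i r) (fun i => ω i s), scatter, hV, hμ]
  simp only [Matrix.smul_apply, Matrix.sub_apply, Matrix.sum_apply, vecMulVec_apply,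
    Pi.smul_apply, Finset.sum_apply, smul_eq_mul, Fintype.card_fin, Nat.cast_succ]
  field_simp
end
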